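/- Let (Ω, F, P) be a probability space, x ∈ ℝ^d, and let X, X̂ : Ω → ℝ^d be square-integrable random vectors with I(X) = I(x) almost surely. Let I : ℝ^d → ℝ be twice continuously differentiable with δ ≤ |∇I(z)| ≤ L and ‖∇²I(z)‖ ≤ M for all z ∈ ℝ^d, where δ, L, M > 0. Let λ : Ω → ℝ be a random variable satisfying I(X̂ + λ∇I(X̂)) = I(x) almost surely and |λ| ≤ δ²/(ML²) almost surely. Then E[λ²] ≤ (4L²/δ⁴)·E[|X̂ − X|²]. -/

import Mathlib

/-!
Expanding `I` to second order along the gradient direction at `X̂` gives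
`λ |∇I(X̂)|² ≈ I(X) - I(X̂)` up to an error `M λ² |∇I(X̂)|² / 2`. The smallness of `λ`
lets this error absorb at most half of the left-hand side, and `I` is `L`-Lipschitz, so
`|λ| δ² ≤ 2 L |X̂ - X|` pointwise; squaring and integrating gives the bound.
-/

open MeasureTheory ProbabilityTheory InnerProductSpace Set
open scoped RealInnerProductSpace

theorem sq_le_of_abs_mul_sq_le {δ L M G e t : ℝ} (hδ : 0 < δ) (hM : 0 < M) (hδG : δ ≤ G)
    (hGL : G ≤ L) (ht : |t| ≤ δ ^ 2 / (M * L ^ 2))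
    (h : |t| * G ^ 2 ≤ L * e + M / 2 * (t ^ 2 * G ^ 2)) :
    t ^ 2 ≤ 4 * L ^ 2 / δ ^ 4 * e ^ 2 := by
  have hL : 0 < L := hδ.trans_le hδG |>.trans_le hGL
  have ht' : |t| * (M * L ^ 2) ≤ δ ^ 2 := (le_div_iff₀ (by positivity)).1 ht
  have hG2 : δ ^ 2 ≤ G ^ 2 := pow_le_pow_left₀ hδ.le hδG 2
  have hGL2 : G ^ 2 ≤ L ^ 2 := pow_le_pow_left₀ (hδ.le.trans hδG) hGL 2
  have hlin : |t| * δ ^ 2 ≤ 2 * (L * e) := by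
    have : M / 2 * (t ^ 2 * G ^ 2) ≤ |t| * δ ^ 2 / 2 := by
      rw [← sq_abs]
      have := mul_le_mul_of_nonneg_left hGL2 (mul_nonneg (abs_nonneg t) hM.le)
      nlinarith [abs_nonneg t]
    nlinarith [mul_le_mul_of_nonneg_left hG2 (abs_nonneg t)]
  rw [div_mul_eq_mul_div, le_div_iff₀ (by positivity)]
  calc t ^ 2 * δ ^ 4 = (|t| * δ ^ 2) ^ 2 := by rw [mul_pow, sq_abs]; ring
    _ ≤ (2 * (L * e)) ^ 2 := pow_le_pow_left₀ (by positivity) hlin 2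
    _ = 4 * L ^ 2 * e ^ 2 := by ring

section Gradient

variable {E : Type*} [NormedAddCommGroup E] [InnerProductSpace ℝ E] [CompleteSpace E]
  {f : E → ℝ}

theorem norm_fderiv_eq_norm_gradient (z : E) : ‖fderiv ℝ f z‖ = ‖gradient f z‖ := by
  rw [← toDual_gradient, LinearIsometryEquiv.norm_map]

theorem ContDiff.gradient {m n : WithTop ℕ∞} (hf : ContDiff ℝ n f) (hmn : m + 1 ≤ n) :
    ContDiff ℝ m (gradient f) :=
  (toDual ℝ E).symm.contDiff.comp (hf.fderiv_right hmn)

theorem abs_sub_le_of_norm_gradient_le {L : ℝ} (hf : Differentiable ℝ f)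
    (hL : ∀ z, ‖gradient f z‖ ≤ L) (a b : E) : |f b - f a| ≤ L * ‖b - a‖ :=
  convex_univ.norm_image_sub_le_of_norm_fderiv_le (fun z _ => hf z)
    (fun z _ => (norm_fderiv_eq_norm_gradient z).trans_le (hL z)) (mem_univ a) (mem_univ b)

theorem abs_sub_sub_inner_gradient_le {M : ℝ} (hf : Differentiable ℝ f)
    (hf' : Differentiable ℝ (gradient f)) (hM : ∀ z, ‖fderiv ℝ (gradient f) z‖ ≤ M) (a v : E) :
    |f (a + v) - f a - ⟪gradient f a, v⟫| ≤ M / 2 * ‖v‖ ^ 2 := by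
  have hline (t : ℝ) : HasDerivAt (fun s : ℝ => a + s • v) v t := by
    simpa using ((hasDerivAt_id t).smul_const v).const_add a
  have hderiv (t : ℝ) : HasDerivAt (fun s => f (a + s • v) - f a - s * ⟪gradient f a, v⟫)
      ⟪gradient f (a + t • v) - gradient f a, v⟫ t := by
    have := (((hf _).hasFDerivAt.comp_hasDerivAt t (hline t)).sub_const (f a)).fun_sub
      ((hasDerivAt_id t).mul_const ⟪gradient f a, v⟫)
    simpa [inner_sub_left, inner_gradient_left] using this
  have hbound (t : ℝ) (ht : t ∈ Ico (0 : ℝ) 1) :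
      ‖⟪gradient f (a + t • v) - gradient f a, v⟫‖ ≤ M * ‖v‖ ^ 2 * t := by
    have hlip : ‖gradient f (a + t • v) - gradient f a‖ ≤ M * ‖t • v‖ := by
      simpa using convex_univ.norm_image_sub_le_of_norm_fderiv_le (fun z _ => hf' z)
        (fun z _ => hM z) (mem_univ a) (mem_univ (a + t • v))
    calc ‖⟪gradient f (a + t • v) - gradient f a, v⟫‖
        ≤ ‖gradient f (a + t • v) - gradient f a‖ * ‖v‖ := norm_inner_le_norm _ _
      _ ≤ M * ‖t • v‖ * ‖v‖ := by gcongr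
      _ = M * ‖v‖ ^ 2 * t := by rw [norm_smul, Real.norm_of_nonneg ht.1]; ring
  have hB (t : ℝ) : HasDerivAt (fun s => M / 2 * ‖v‖ ^ 2 * s ^ 2) (M * ‖v‖ ^ 2 * t) t :=
    ((hasDerivAt_pow 2 t).const_mul (M / 2 * ‖v‖ ^ 2)).congr_deriv (by norm_num; ring)
  simpa using image_norm_le_of_norm_deriv_right_le_deriv_boundary
    (fun t _ => (hderiv t).continuousAt.continuousWithinAt)
    (fun t _ => (hderiv t).hasDerivWithinAt) (by simp) hB hbound (right_mem_Icc.2 zero_le_one)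

theorem sq_le_of_apply_add_smul_gradient_eq {δ L M t : ℝ} {a b : E}
    (hf : Differentiable ℝ f) (hf' : Differentiable ℝ (gradient f)) (hδ : 0 < δ) (hM : 0 < M)
    (hδa : δ ≤ ‖gradient f a‖) (hL : ∀ z, ‖gradient f z‖ ≤ L)
    (hHess : ∀ z, ‖fderiv ℝ (gradient f) z‖ ≤ M) (hproj : f (a + t • gradient f a) = f b)
    (ht : |t| ≤ δ ^ 2 / (M * L ^ 2)) :
    t ^ 2 ≤ 4 * L ^ 2 / δ ^ 4 * ‖a - b‖ ^ 2 := by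
  have htaylor := abs_sub_sub_inner_gradient_le hf hf' hHess a (t • gradient f a)
  have hlip := abs_sub_le_of_norm_gradient_le hf hL a b
  rw [hproj, real_inner_smul_right, real_inner_self_eq_norm_sq, norm_smul, Real.norm_eq_abs,
    mul_pow, sq_abs] at htaylor
  rw [norm_sub_rev] at hlip
  refine sq_le_of_abs_mul_sq_le hδ hM hδa (hL a) ht ?_
  calc |t| * ‖gradient f a‖ ^ 2 = |t * ‖gradient f a‖ ^ 2| := by
        rw [abs_mul, abs_of_nonneg (sq_nonneg ‖gradient f a‖)]
    _ = |(f b - f a) - (f b - f a - t * ‖gradient f a‖ ^ 2)| := by ring_nf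
    _ ≤ |f b - f a| + |f b - f a - t * ‖gradient f a‖ ^ 2| := abs_sub _ _
    _ ≤ _ := add_le_add hlip htaylor

end Gradient

theorem lambda_mean_square_bound_general {Ω : Type*} [MeasureSpace Ω]
    (d : ℕ) (x : EuclideanSpace ℝ (Fin d))
    (X Xhat : Ω → EuclideanSpace ℝ (Fin d))
    (hX : MemLp X 2 ℙ) (hXhat : MemLp Xhat 2 ℙ)
    (I : EuclideanSpace ℝ (Fin d) → ℝ) (hI : ContDiff ℝ 2 I)
    (δ L M : ℝ) (hδ : 0 < δ) (hM : 0 < M)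
    (hgradlb : ∀ z : EuclideanSpace ℝ (Fin d), δ ≤ ‖gradient I z‖)
    (hgradub : ∀ z : EuclideanSpace ℝ (Fin d), ‖gradient I z‖ ≤ L)
    (hHess : ∀ z : EuclideanSpace ℝ (Fin d), ‖fderiv ℝ (fun w => gradient I w) z‖ ≤ M)
    (hlevel : ∀ᵐ ω ∂(ℙ : Measure Ω), I (X ω) = I x)
    (lam : Ω → ℝ)
    (hproj : ∀ᵐ ω ∂(ℙ : Measure Ω), I (Xhat ω + lam ω • gradient I (Xhat ω)) = I x)
    (hsmall : ∀ᵐ ω ∂(ℙ : Measure Ω), |lam ω| ≤ δ ^ 2 / (M * L ^ 2)) :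
    ∫ ω, (lam ω) ^ 2 ∂(ℙ : Measure Ω) ≤ (4 * L ^ 2 / δ ^ 4) * ∫ ω, ‖Xhat ω - X ω‖ ^ 2 ∂(ℙ : Measure Ω) := by
  have hI₁ : Differentiable ℝ I := hI.differentiable two_ne_zero
  have hI₂ : Differentiable ℝ (gradient I) :=
    (hI.gradient (m := 1) le_rfl).differentiable one_ne_zero
  have hpointwise : ∀ᵐ ω ∂(ℙ : Measure Ω),
      lam ω ^ 2 ≤ (4 * L ^ 2 / δ ^ 4) * ‖Xhat ω - X ω‖ ^ 2 := by
    filter_upwards [hlevel, hproj, hsmall] with ω hXω hprojω hsmallω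
    exact sq_le_of_apply_add_smul_gradient_eq hI₁ hI₂ hδ hM (hgradlb _) hgradub hHess
      (hprojω.trans hXω.symm) hsmallω
  calc ∫ ω, lam ω ^ 2 ∂(ℙ : Measure Ω)
      ≤ ∫ ω, (4 * L ^ 2 / δ ^ 4) * ‖Xhat ω - X ω‖ ^ 2 ∂(ℙ : Measure Ω) :=
        integral_mono_of_nonneg (ae_of_all _ fun ω => sq_nonneg _)
          ((hXhat.sub hX).norm.integrable_sq.const_mul _) hpointwise
    _ = (4 * L ^ 2 / δ ^ 4) * ∫ ω, ‖Xhat ω - X ω‖ ^ 2 ∂(ℙ : Measure Ω) :=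
        integral_const_mul _ _

/-- Mean-square bound on the projection parameter:
`E[λ²] ≤ (4L²/δ⁴)·E[|X̂ − X|²]`, where `λ` realizes the projection onto the level set
`{z : I(z) = I(x)}` in the direction `∇I(X̂)`. -/
theorem lambda_mean_square_bound {Ω : Type*} [MeasureSpace Ω]
    [IsProbabilityMeasure (ℙ : Measure Ω)]
    (d : ℕ) (x : EuclideanSpace ℝ (Fin d))
    (X Xhat : Ω → EuclideanSpace ℝ (Fin d))
    (hX : MemLp X 2 ℙ) (hXhat : MemLp Xhat 2 ℙ)
    (I : EuclideanSpace ℝ (Fin d) → ℝ) (hI : ContDiff ℝ 2 I)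
    (δ L M : ℝ) (hδ : 0 < δ) (hL : 0 < L) (hM : 0 < M)
    (hgradlb : ∀ z : EuclideanSpace ℝ (Fin d), δ ≤ ‖gradient I z‖)
    (hgradub : ∀ z : EuclideanSpace ℝ (Fin d), ‖gradient I z‖ ≤ L)
    (hHess : ∀ z : EuclideanSpace ℝ (Fin d), ‖fderiv ℝ (fun w => gradient I w) z‖ ≤ M)
    (hlevel : ∀ᵐ ω ∂(ℙ : Measure Ω), I (X ω) = I x)
    (lam : Ω → ℝ) (hlam : Measurable lam)
    (hproj : ∀ᵐ ω ∂(ℙ : Measure Ω), I (Xhat ω + lam ω • gradient I (Xhat ω)) = I x)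
    (hsmall : ∀ᵐ ω ∂(ℙ : Measure Ω), |lam ω| ≤ δ ^ 2 / (M * L ^ 2)) :
    ∫ ω, (lam ω) ^ 2 ∂(ℙ : Measure Ω) ≤ (4 * L ^ 2 / δ ^ 4) * ∫ ω, ‖Xhat ω - X ω‖ ^ 2 ∂(ℙ : Measure Ω) :=
  lambda_mean_square_bound_general d x X Xhat hX hXhat I hI δ L M hδ hM hgradlb hgradub hHess hlevel
    lam hproj hsmall
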